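/- arXiv:2602.18244 — 6 statements merged into one kernel-verified Lean document; each statement's English description precedes it below -/
import Mathlib

section
/- For all integers m ≥ 3, n ≥ 2, k ≥ 2 with m − k ≥ 1, the all-positive signed generalized book graph (B(m,n,k),σ₀), where σ₀ assigns +1 to every edge, satisfies χ'(B(m,n,k),σ₀) = n+1. -/
open scoped Classical

/-- The color set `M_q`: for `q = 2r`, `{±1, …, ±r}`; for `q = 2r+1`, `{0, ±1, …, ±r}`. -/
def colorSet (q : ℕ) : Set ℤ :=
  {c : ℤ | c.natAbs ≤ q / 2 ∧ (Even q → c ≠ 0)}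

/-- A proper `q`-edge coloring of the signed graph `(G, σ)`, given as an assignment
`γ v w` of a color to the incidence `(v, vw)`. -/
def IsProperSignedEdgeColoring {V : Type*} (G : SimpleGraph V)
    (σ : Sym2 V → ℤˣ) (q : ℕ) (γ : V → V → ℤ) : Prop :=
  (∀ ⦃v w : V⦄, G.Adj v w → γ v w ∈ colorSet q) ∧
  (∀ ⦃v w : V⦄, G.Adj v w → γ v w = (-(σ s(v, w) : ℤ)) * γ w v) ∧
  (∀ ⦃v w₁ w₂ : V⦄, G.Adj v w₁ → G.Adj v w₂ → w₁ ≠ w₂ → γ v w₁ ≠ γ v w₂)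

/-- The chromatic index of a signed graph: the least `q` admitting a proper
`q`-edge coloring. -/
noncomputable def signedChromaticIndex {V : Type*} (G : SimpleGraph V)
    (σ : Sym2 V → ℤˣ) : ℕ :=
  sInf {q : ℕ | ∃ γ : V → V → ℤ, IsProperSignedEdgeColoring G σ q γ}

/-- Vertices of the generalized book graph `B(m,n,k)`: the spine path `v₁ … v_k`
(`Sum.inl`) together with the internal vertices `u_j^i` of the `n` pages (`Sum.inr`). -/
abbrev BookVertex (m n k : ℕ) : Type := Fin k ⊕ Fin n × Fin (m - k)

/-- The generalized book graph `B(m,n,k)`: `n` cycles of length `m` sharing the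
common path `v₁ v₂ ⋯ v_k`, the `i`-th cycle being `v₁ u₁ⁱ u₂ⁱ ⋯ u_{m-k}ⁱ v_k ⋯ v₂ v₁`. -/
def bookGraph (m n k : ℕ) : SimpleGraph (BookVertex m n k) :=
  SimpleGraph.fromRel (fun x y =>
    match x, y with
    | Sum.inl a, Sum.inl b => (b : ℕ) = (a : ℕ) + 1
    | Sum.inl a, Sum.inr p =>
        ((a : ℕ) = 0 ∧ (p.2 : ℕ) = 0) ∨ ((a : ℕ) = k - 1 ∧ (p.2 : ℕ) = m - k - 1)
    | Sum.inr p, Sum.inr p' => p.1 = p'.1 ∧ (p'.2 : ℕ) = (p.2 : ℕ) + 1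
    | Sum.inr _, Sum.inl _ => False)

/-- The signature `σ_l` on `B(m,n,k)` whose negative edges are exactly
`v₁u₁ⁱ` for `1 ≤ i ≤ l`. -/
noncomputable def bookSigma (m n k l : ℕ) (hk : 0 < k) (hmk : 0 < m - k) :
    Sym2 (BookVertex m n k) → ℤˣ :=
  fun e =>
    if ∃ i : Fin n, (i : ℕ) < l ∧
        e = s(Sum.inl (⟨0, hk⟩ : Fin k),
              Sum.inr ((i, ⟨0, hmk⟩) : Fin n × Fin (m - k)))
    then -1 else 1

def pv (n i : ℕ) : ℤ :=
  if i % 2 = 0 ∨ i = n - 1 then ((i / 2 : ℕ) : ℤ) + 1 else -(((i / 2 : ℕ) : ℤ) + 1)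

lemma pv_ne_zero (n i : ℕ) : pv n i ≠ 0 := by
  unfold pv; split_ifs <;> omega

lemma pv_natAbs (n i : ℕ) (h : i < n) : (pv n i).natAbs ≤ (n + 1) / 2 := by
  unfold pv; split_ifs <;> omega

lemma pv_ne_neg_r (n i : ℕ) (h : i < n) : pv n i ≠ -(((n + 1) / 2 : ℕ) : ℤ) := by
  unfold pv; split_ifs <;> omega

lemma pv_inj (n i i' : ℕ) (hi : i < n) (hi' : i' < n) (h : pv n i = pv n i') :
    i = i' ∨ (n % 2 = 0 ∧ (i = n - 2 ∨ i = n - 1) ∧ (i' = n - 2 ∨ i' = n - 1)) := by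
  unfold pv at h; split_ifs at h <;> omega

/-- color of incidence (v_a, edge to page vertex p) -/
def bf (m n k : ℕ) (a : Fin k) (p : Fin n × Fin (m - k)) : ℤ :=
  if n % 2 = 0 ∧ (((p.1 : ℕ) = n - 2 ∧ (a : ℕ) = 0) ∨ ((p.1 : ℕ) = n - 1 ∧ (a : ℕ) ≠ 0)) then 0
  else if (a : ℕ) = 0 then pv n (p.1 : ℕ) else -(pv n (p.1 : ℕ))

def bg (m n k : ℕ) : BookVertex m n k → BookVertex m n k → ℤ :=
  fun x y =>
    match x, y with
    | Sum.inl a, Sum.inl b =>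
        if (b : ℕ) < (a : ℕ) then (((n + 1) / 2 : ℕ) : ℤ) else -((((n + 1) / 2 : ℕ)) : ℤ)
    | Sum.inl a, Sum.inr p => bf m n k a p
    | Sum.inr p, Sum.inl a => -(bf m n k a p)
    | Sum.inr p, Sum.inr q => if (q.2 : ℕ) < (p.2 : ℕ) then -(pv n (p.1 : ℕ)) else pv n (p.1 : ℕ)

lemma adj_ll {m n k : ℕ} {a b : Fin k} :
    (bookGraph m n k).Adj (Sum.inl a) (Sum.inl b) ↔ ((b : ℕ) = a + 1 ∨ (a : ℕ) = b + 1) := by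
  rw [bookGraph, SimpleGraph.fromRel_adj]
  constructor
  · rintro ⟨-, h⟩; exact h
  · intro h
    refine ⟨fun e => ?_, h⟩
    injection e with e
    rw [e] at h; omega

lemma adj_lr {m n k : ℕ} {a : Fin k} {p : Fin n × Fin (m - k)} :
    (bookGraph m n k).Adj (Sum.inl a) (Sum.inr p) ↔
      ((a : ℕ) = 0 ∧ (p.2 : ℕ) = 0) ∨ ((a : ℕ) = k - 1 ∧ (p.2 : ℕ) = m - k - 1) := by
  rw [bookGraph, SimpleGraph.fromRel_adj]
  constructor
  · rintro ⟨-, h | h⟩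
    · exact h
    · exact h.elim
  · intro h; exact ⟨fun e => by injection e, Or.inl h⟩

lemma adj_rl {m n k : ℕ} {a : Fin k} {p : Fin n × Fin (m - k)} :
    (bookGraph m n k).Adj (Sum.inr p) (Sum.inl a) ↔
      ((a : ℕ) = 0 ∧ (p.2 : ℕ) = 0) ∨ ((a : ℕ) = k - 1 ∧ (p.2 : ℕ) = m - k - 1) := by
  rw [SimpleGraph.adj_comm]; exact adj_lr

lemma adj_rr {m n k : ℕ} {p q : Fin n × Fin (m - k)} :
    (bookGraph m n k).Adj (Sum.inr p) (Sum.inr q) ↔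
      p.1 = q.1 ∧ ((q.2 : ℕ) = (p.2 : ℕ) + 1 ∨ (p.2 : ℕ) = (q.2 : ℕ) + 1) := by
  rw [bookGraph, SimpleGraph.fromRel_adj]
  constructor
  · rintro ⟨-, ⟨h1, h2⟩ | ⟨h1, h2⟩⟩
    · exact ⟨h1, Or.inl h2⟩
    · exact ⟨h1.symm, Or.inr h2⟩
  · rintro ⟨h1, h2 | h2⟩
    · exact ⟨fun e => by injection e with e; rw [e] at h2; omega, Or.inl ⟨h1, h2⟩⟩
    · exact ⟨fun e => by injection e with e; rw [e] at h2; omega, Or.inr ⟨h1.symm, h2⟩⟩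

lemma bg_mem {m n k : ℕ} (hn : 2 ≤ n) {v w : BookVertex m n k}
    (h : (bookGraph m n k).Adj v w) : bg m n k v w ∈ colorSet (n + 1) := by
  rcases v with a | p <;> rcases w with b | p' <;>
    simp only [bg, bf] <;> constructor
  · split_ifs <;> omega
  · intro _; split_ifs <;> omega
  · have hb := pv_natAbs n (p'.1 : ℕ) p'.1.isLt
    split_ifs <;> omega
  · intro he
    rw [Nat.even_iff] at he
    have h1 := pv_ne_zero n (p'.1 : ℕ)
    split_ifs <;> omega
  · have hb := pv_natAbs n (p.1 : ℕ) p.1.isLt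
    split_ifs <;> omega
  · intro he
    rw [Nat.even_iff] at he
    have h1 := pv_ne_zero n (p.1 : ℕ)
    split_ifs <;> omega
  · have hb := pv_natAbs n (p.1 : ℕ) p.1.isLt
    split_ifs <;> omega
  · intro _
    have h1 := pv_ne_zero n (p.1 : ℕ)
    split_ifs <;> omega

lemma bg_antisym {m n k : ℕ} {v w : BookVertex m n k}
    (h : (bookGraph m n k).Adj v w) : bg m n k v w = -bg m n k w v := by
  rcases v with a | p <;> rcases w with b | q
  · rw [adj_ll] at h
    simp only [bg]
    split_ifs <;> omega
  · simp only [bg]; rw [neg_neg]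
  · simp only [bg]
  · rw [adj_rr] at h
    obtain ⟨h1, h2⟩ := h
    have hv : (p.1 : ℕ) = (q.1 : ℕ) := congrArg Fin.val h1
    have hpv : pv n (p.1 : ℕ) = pv n (q.1 : ℕ) := by rw [hv]
    simp only [bg]
    split_ifs <;> omega

lemma bg_distinct {m n k : ℕ} (hn : 2 ≤ n) (hk : 2 ≤ k) (hmk : 1 ≤ m - k)
    {v w₁ w₂ : BookVertex m n k} (h1 : (bookGraph m n k).Adj v w₁)
    (h2 : (bookGraph m n k).Adj v w₂) (hne : w₁ ≠ w₂) :
    bg m n k v w₁ ≠ bg m n k v w₂ := by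
  rcases v with a | p <;> rcases w₁ with b₁ | p₁ <;> rcases w₂ with b₂ | p₂
  · -- spine, spine, spine
    rw [adj_ll] at h1 h2
    have hb : (b₁ : ℕ) ≠ (b₂ : ℕ) := fun e => hne (by rw [Fin.ext_iff.mpr e])
    have ha := a.isLt
    have hb1 := b₁.isLt
    have hb2 := b₂.isLt
    simp only [bg]
    split_ifs <;> omega
  · -- spine, spine, page
    rw [adj_ll] at h1
    rw [adj_lr] at h2
    have ha := a.isLt
    have hb1 := b₁.isLt
    have hz := pv_ne_zero n (p₂.1 : ℕ)
    have hr := pv_ne_neg_r n (p₂.1 : ℕ) p₂.1.isLt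
    simp only [bg, bf]
    split_ifs <;> omega
  · -- spine, page, spine
    rw [adj_lr] at h1
    rw [adj_ll] at h2
    have ha := a.isLt
    have hb2 := b₂.isLt
    have hz := pv_ne_zero n (p₁.1 : ℕ)
    have hr := pv_ne_neg_r n (p₁.1 : ℕ) p₁.1.isLt
    simp only [bg, bf]
    split_ifs <;> omega
  · -- spine, page, page
    rw [adj_lr] at h1 h2
    have ha := a.isLt
    have hz1 := pv_ne_zero n (p₁.1 : ℕ)
    have hz2 := pv_ne_zero n (p₂.1 : ℕ)
    have hp : (p₁.1 : ℕ) ≠ (p₂.1 : ℕ) ∨ (p₁.2 : ℕ) ≠ (p₂.2 : ℕ) := by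
      by_contra hc
      push_neg at hc
      exact hne (by rw [Prod.ext (Fin.ext hc.1) (Fin.ext hc.2)])
    by_cases hpv : pv n (p₁.1 : ℕ) = pv n (p₂.1 : ℕ)
    · have hd := pv_inj n _ _ p₁.1.isLt p₂.1.isLt hpv
      simp only [bg, bf]
      split_ifs <;> omega
    · simp only [bg, bf]
      split_ifs <;> omega
  · -- page, spine, spine
    rw [adj_rl] at h1 h2
    have hb : (b₁ : ℕ) ≠ (b₂ : ℕ) := fun e => hne (by rw [Fin.ext_iff.mpr e])
    have hz := pv_ne_zero n (p.1 : ℕ)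
    simp only [bg, bf]
    split_ifs <;> omega
  · -- page, spine, page
    rw [adj_rl] at h1
    rw [adj_rr] at h2
    have hv : (p.1 : ℕ) = (p₂.1 : ℕ) := congrArg Fin.val h2.1
    have hpv : pv n (p.1 : ℕ) = pv n (p₂.1 : ℕ) := by rw [hv]
    have h2' := h2.2
    have hz := pv_ne_zero n (p.1 : ℕ)
    have hj := p.2.isLt
    have hj2 := p₂.2.isLt
    have hb1 := b₁.isLt
    simp only [bg, bf]
    split_ifs <;> omega
  · -- page, page, spine
    rw [adj_rr] at h1
    rw [adj_rl] at h2
    have hv : (p.1 : ℕ) = (p₁.1 : ℕ) := congrArg Fin.val h1.1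
    have hpv : pv n (p.1 : ℕ) = pv n (p₁.1 : ℕ) := by rw [hv]
    have h1' := h1.2
    have hz := pv_ne_zero n (p.1 : ℕ)
    have hj := p.2.isLt
    have hj1 := p₁.2.isLt
    have hb2 := b₂.isLt
    simp only [bg, bf]
    split_ifs <;> omega
  · -- page, page, page
    rw [adj_rr] at h1 h2
    have hv1 : (p.1 : ℕ) = (p₁.1 : ℕ) := congrArg Fin.val h1.1
    have hv2 : (p.1 : ℕ) = (p₂.1 : ℕ) := congrArg Fin.val h2.1
    have hpv1 : pv n (p.1 : ℕ) = pv n (p₁.1 : ℕ) := by rw [hv1]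
    have hpv2 : pv n (p.1 : ℕ) = pv n (p₂.1 : ℕ) := by rw [hv2]
    have h1' := h1.2
    have h2' := h2.2
    have hz := pv_ne_zero n (p.1 : ℕ)
    have hp : (p₁.1 : ℕ) ≠ (p₂.1 : ℕ) ∨ (p₁.2 : ℕ) ≠ (p₂.2 : ℕ) := by
      by_contra hc
      push_neg at hc
      exact hne (by rw [Prod.ext (Fin.ext hc.1) (Fin.ext hc.2)])
    simp only [bg]
    split_ifs <;> omega

lemma book_lower_bound {m n k q : ℕ} (hn : 2 ≤ n) (hk : 2 ≤ k) (hmk : 1 ≤ m - k)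
    {σ : Sym2 (BookVertex m n k) → ℤˣ} {γ : BookVertex m n k → BookVertex m n k → ℤ}
    (hγ : IsProperSignedEdgeColoring (bookGraph m n k) σ q γ) : n + 1 ≤ q := by
  have hk0 : 0 < k := by omega
  have h1k : 1 < k := by omega
  have hmk0 : 0 < m - k := hmk
  set v₁ : BookVertex m n k := Sum.inl ⟨0, hk0⟩ with hv₁
  set w : Fin (n + 1) → BookVertex m n k := fun t =>
    if h : (t : ℕ) < n then Sum.inr (⟨t, h⟩, ⟨0, hmk0⟩) else Sum.inl ⟨1, h1k⟩ with hw
  have hadj : ∀ t, (bookGraph m n k).Adj v₁ (w t) := by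
    intro t
    rw [hw]
    dsimp only
    by_cases h : (t : ℕ) < n
    · rw [dif_pos h]
      exact adj_lr.mpr (Or.inl ⟨rfl, rfl⟩)
    · rw [dif_neg h]
      exact adj_ll.mpr (Or.inl rfl)
  have hwinj : Function.Injective w := by
    intro t t' he
    rw [hw] at he
    simp only at he
    by_cases h : (t : ℕ) < n <;> by_cases h' : (t' : ℕ) < n
    · rw [dif_pos h, dif_pos h'] at he
      injection he with he
      have : (t : ℕ) = (t' : ℕ) := congrArg (fun x => (x.1 : ℕ)) he
      exact Fin.ext this
    · rw [dif_pos h, dif_neg h'] at he; exact absurd he (by simp)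
    · rw [dif_neg h, dif_pos h'] at he; exact absurd he (by simp)
    · have ht := t.isLt
      have ht' := t'.isLt
      exact Fin.ext (by omega)
  have hginj : Function.Injective (fun t => γ v₁ (w t)) := by
    intro t t' he
    by_contra hc
    exact hγ.2.2 (hadj t) (hadj t') (fun e => hc (hwinj e)) he
  set S : Finset ℤ :=
    (Finset.Icc (-((q / 2 : ℕ) : ℤ)) ((q / 2 : ℕ) : ℤ)).filter (fun c => ¬(Even q ∧ c = 0))
    with hS
  have hmaps : ∀ t : Fin (n + 1), γ v₁ (w t) ∈ S := by
    intro t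
    have hm := hγ.1 (hadj t)
    obtain ⟨hm1, hm2⟩ := hm
    rw [hS]
    simp only [Finset.mem_filter, Finset.mem_Icc]
    refine ⟨⟨?_, ?_⟩, ?_⟩
    · omega
    · omega
    · rintro ⟨he, h0⟩
      exact hm2 he h0
  have hcard : S.card ≤ q := by
    by_cases hq : Even q
    · have h0 : S ⊆ (Finset.Icc (-((q / 2 : ℕ) : ℤ)) ((q / 2 : ℕ) : ℤ)).erase 0 := by
        intro c hc
        rw [hS] at hc
        simp only [Finset.mem_filter] at hc
        rw [Finset.mem_erase]
        exact ⟨fun e => hc.2 ⟨hq, e⟩, hc.1⟩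
      have hle := Finset.card_le_card h0
      rw [Finset.card_erase_of_mem (by simp only [Finset.mem_Icc]; omega)] at hle
      rw [Int.card_Icc] at hle
      rw [Nat.even_iff] at hq
      omega
    · have h0 : S ⊆ Finset.Icc (-((q / 2 : ℕ) : ℤ)) ((q / 2 : ℕ) : ℤ) :=
        Finset.filter_subset _ _
      have hle := Finset.card_le_card h0
      rw [Int.card_Icc] at hle
      rw [Nat.even_iff] at hq
      omega
  calc n + 1 = (Finset.univ : Finset (Fin (n + 1))).card := by simp
    _ ≤ S.card := Finset.card_le_card_of_injOn (fun t => γ v₁ (w t))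
        (fun t _ => hmaps t) hginj.injOn
    _ ≤ q := hcard

/-- For all `m ≥ 3`, `n ≥ 2`, `k ≥ 2` with `m - k ≥ 1`, the all-positive
signed generalized book graph `(B(m,n,k), σ₀)` has chromatic index `n + 1`. -/
theorem book_chromatic_index_all_positive (m n k : ℕ) (hm : 3 ≤ m) (hn : 2 ≤ n)
    (hk : 2 ≤ k) (hmk : 1 ≤ m - k) :
    signedChromaticIndex (bookGraph m n k) (fun _ => (1 : ℤˣ)) = n + 1 := by
  have hex : IsProperSignedEdgeColoring (bookGraph m n k) (fun _ => (1 : ℤˣ)) (n + 1)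
      (bg m n k) := by
    refine ⟨fun v w h => bg_mem hn h, fun v w h => ?_,
      fun v w₁ w₂ h1 h2 hne => bg_distinct hn hk hmk h1 h2 hne⟩
    have := bg_antisym h
    simpa [neg_one_mul] using this
  have hmem : n + 1 ∈ {q : ℕ | ∃ γ, IsProperSignedEdgeColoring (bookGraph m n k)
      (fun _ => (1 : ℤˣ)) q γ} := ⟨bg m n k, hex⟩
  rw [signedChromaticIndex]
  apply le_antisymm (Nat.sInf_le hmem)
  obtain ⟨γ, hγ⟩ := Nat.sInf_mem (⟨n + 1, hmem⟩ : Set.Nonempty _)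
  exact book_lower_bound hn hk hmk hγ
end

section
/- For all odd integers m ≥ 3 and all integers n ≥ 2, k ≥ 2 with m − k ≥ 1, the signed generalized book graph (B(m,n,k),σ_n), where σ_n has negative edge set {v₁u₁ⁱ : 1 ≤ i ≤ n}, satisfies χ'(B(m,n,k),σ_n) = n+1. -/
open scoped Classical

namespace BookAux

def dcol (q j : ℕ) : ℤ :=
  if q % 2 = 1 then
    (if j % 2 = 1 then (((j+1)/2 : ℕ) : ℤ) else -((j/2 : ℕ) : ℤ))
  else
    (if j % 2 = 0 then ((j/2 : ℕ) : ℤ) + 1 else -(((j+1)/2 : ℕ) : ℤ))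

lemma dcol_inj {q j j' : ℕ} (h : dcol q j = dcol q j') : j = j' := by
  unfold dcol at h; split_ifs at h <;> omega

lemma dcol_mem {q j : ℕ} (h : j < q) : dcol q j ∈ colorSet q := by
  unfold dcol
  simp only [colorSet, Set.mem_setOf_eq, Nat.even_iff]
  split_ifs <;> constructor <;> omega

lemma dcol_last_ne_zero {n : ℕ} (hn : 2 ≤ n) : dcol (n+1) n ≠ 0 := by
  unfold dcol; split_ifs <;> omega

lemma neg_mem_colorSet {q : ℕ} {c : ℤ} (h : c ∈ colorSet q) : -c ∈ colorSet q := by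
  simp only [colorSet, Set.mem_setOf_eq] at *
  constructor
  · omega
  · intro he; have := h.2 he; omega

lemma succ_mod {n i : ℕ} (hi : i < n) : (i+1) % n = if i+1 = n then 0 else i+1 := by
  split_ifs with h
  · rw [h, Nat.mod_self]
  · exact Nat.mod_eq_of_lt (by omega)

lemma a_exists (n : ℕ) (hn : 2 ≤ n) (i : ℕ) (hi : i < n) :
    ∃ a : ℤ, a ∈ colorSet (n+1) ∧ a ≠ 0 ∧ a ≠ dcol (n+1) i ∧
      a ≠ -(dcol (n+1) ((i+1) % n)) := by
  by_cases h3 : 3 ≤ n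
  · have m1 : (1:ℤ) ∈ colorSet (n+1) := by
      simp only [colorSet, Set.mem_setOf_eq]; constructor <;> omega
    have m2 : (-1:ℤ) ∈ colorSet (n+1) := by
      simp only [colorSet, Set.mem_setOf_eq]; constructor <;> omega
    have m3 : (2:ℤ) ∈ colorSet (n+1) := by
      simp only [colorSet, Set.mem_setOf_eq]; constructor <;> omega
    set x := dcol (n+1) i
    set y := -(dcol (n+1) ((i+1) % n))
    by_cases e1 : (1:ℤ) ≠ x ∧ (1:ℤ) ≠ y
    · exact ⟨1, m1, by omega, e1.1, e1.2⟩
    by_cases e2 : (-1:ℤ) ≠ x ∧ (-1:ℤ) ≠ y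
    · exact ⟨-1, m2, by omega, e2.1, e2.2⟩
    refine ⟨2, m3, by omega, ?_, ?_⟩ <;> omega
  · have hn2 : n = 2 := by omega
    subst hn2
    interval_cases i
    · refine ⟨1, ?_, by omega, ?_, ?_⟩
      · simp only [colorSet, Set.mem_setOf_eq]; constructor <;> omega
      · simp [dcol]
      · simp [dcol]
    · refine ⟨-1, ?_, by omega, ?_, ?_⟩
      · simp only [colorSet, Set.mem_setOf_eq]; constructor <;> omega
      · simp [dcol]
      · simp [dcol]

variable {m n k : ℕ}

lemma adj_ll {a b : Fin k} :
    (bookGraph m n k).Adj (Sum.inl a) (Sum.inl b) ↔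
      ((b:ℕ) = (a:ℕ)+1 ∨ (a:ℕ) = (b:ℕ)+1) := by
  simp only [bookGraph, SimpleGraph.fromRel_adj, ne_eq, Sum.inl.injEq]
  constructor
  · rintro ⟨-, h⟩; exact h
  · intro h
    refine ⟨fun hab => ?_, h⟩
    have : (a:ℕ) = (b:ℕ) := by rw [hab]
    omega

lemma adj_lr {a : Fin k} {i : Fin n} {p : Fin (m-k)} :
    (bookGraph m n k).Adj (Sum.inl a) (Sum.inr (i, p)) ↔
      (((a : ℕ) = 0 ∧ (p : ℕ) = 0) ∨ ((a : ℕ) = k - 1 ∧ (p : ℕ) = m - k - 1)) := by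
  simp only [bookGraph, SimpleGraph.fromRel_adj, ne_eq]
  constructor
  · rintro ⟨-, h | h⟩
    · exact h
    · exact h.elim
  · intro h; exact ⟨fun hc => by simp at hc, Or.inl h⟩

lemma adj_rl {a : Fin k} {i : Fin n} {p : Fin (m-k)} :
    (bookGraph m n k).Adj (Sum.inr (i, p)) (Sum.inl a) ↔
      (((a : ℕ) = 0 ∧ (p : ℕ) = 0) ∨ ((a : ℕ) = k - 1 ∧ (p : ℕ) = m - k - 1)) := by
  rw [SimpleGraph.adj_comm]; exact adj_lr

lemma adj_rr {i i' : Fin n} {p p' : Fin (m-k)} :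
    (bookGraph m n k).Adj (Sum.inr (i, p)) (Sum.inr (i', p')) ↔
      (i = i' ∧ ((p':ℕ) = (p:ℕ)+1 ∨ (p:ℕ) = (p':ℕ)+1)) := by
  simp only [bookGraph, SimpleGraph.fromRel_adj, ne_eq, Sum.inr.injEq, Prod.mk.injEq]
  constructor
  · rintro ⟨-, ⟨h1, h2⟩ | ⟨h1, h2⟩⟩
    · exact ⟨h1, Or.inl h2⟩
    · exact ⟨h1.symm, Or.inr h2⟩
  · rintro ⟨h1, h2 | h2⟩
    · refine ⟨fun hc => ?_, Or.inl ⟨h1, h2⟩⟩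
      have : (p:ℕ) = (p':ℕ) := by rw [hc.2]
      omega
    · refine ⟨fun hc => ?_, Or.inr ⟨h1.symm, h2⟩⟩
      have : (p:ℕ) = (p':ℕ) := by rw [hc.2]
      omega

/-- sigma on spine edges is 1 -/
lemma sigma_ll (hk' : 0 < k) (hmk' : 0 < m-k) (a b : Fin k) :
    bookSigma m n k n hk' hmk' s(Sum.inl a, Sum.inl b) = 1 := by
  unfold bookSigma
  rw [if_neg]
  rintro ⟨i, -, h⟩
  rw [Sym2.eq_iff] at h
  rcases h with ⟨h1, h2⟩ | ⟨h1, h2⟩ <;> simp at h1 h2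

lemma sigma_rr (hk' : 0 < k) (hmk' : 0 < m-k) (p p' : Fin n × Fin (m-k)) :
    bookSigma m n k n hk' hmk' s(Sum.inr p, Sum.inr p') = 1 := by
  unfold bookSigma
  rw [if_neg]
  rintro ⟨i, -, h⟩
  rw [Sym2.eq_iff] at h
  rcases h with ⟨h1, h2⟩ | ⟨h1, h2⟩ <;> simp at h1 h2

lemma sigma_lr_far (hk' : 0 < k) (hmk' : 0 < m-k) {a : Fin k} (ha : (a:ℕ) ≠ 0)
    (p : Fin n × Fin (m-k)) :
    bookSigma m n k n hk' hmk' s(Sum.inl a, Sum.inr p) = 1 := by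
  unfold bookSigma
  rw [if_neg]
  rintro ⟨i, -, h⟩
  rw [Sym2.eq_iff] at h
  rcases h with ⟨h1, h2⟩ | ⟨h1, h2⟩
  · rw [Sum.inl.injEq] at h1
    exact ha (by rw [h1])
  · simp at h1

lemma sigma_lr_near (hk' : 0 < k) (hmk' : 0 < m-k) {a : Fin k} (ha : (a:ℕ) = 0)
    {i : Fin n} {p2 : Fin (m-k)} (hp : (p2:ℕ) = 0) :
    bookSigma m n k n hk' hmk' s(Sum.inl a, Sum.inr (i, p2)) = -1 := by
  unfold bookSigma
  rw [if_pos]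
  refine ⟨i, i.2, ?_⟩
  have h1 : a = (⟨0, hk'⟩ : Fin k) := Fin.ext ha
  have h2 : p2 = (⟨0, hmk'⟩ : Fin (m-k)) := Fin.ext hp
  rw [h1, h2]

/-- the coloring -/
def bookColoring (n k mk : ℕ) (A : Fin n → ℤ) :
    (Fin k ⊕ Fin n × Fin mk) → (Fin k ⊕ Fin n × Fin mk) → ℤ
  | Sum.inl a, Sum.inl b =>
      if (b:ℕ) = (a:ℕ)+1 then dcol (n+1) n else -(dcol (n+1) n)
  | Sum.inl a, Sum.inr p =>
      if (a:ℕ) = 0 then dcol (n+1) p.1 else -(dcol (n+1) (((p.1:ℕ)+1) % n))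
  | Sum.inr p, Sum.inl a =>
      if (a:ℕ) = 0 then dcol (n+1) p.1 else dcol (n+1) (((p.1:ℕ)+1) % n)
  | Sum.inr p, Sum.inr p' =>
      if (p'.2:ℕ) = (p.2:ℕ)+1 then A p.1 else -(A p.1)

lemma proper (m n k : ℕ) (hm : 3 ≤ m) (hn : 2 ≤ n) (hk : 2 ≤ k) (hmk : 1 ≤ m - k)
    (hk' : 0 < k) (hmk' : 0 < m - k)
    (A : Fin n → ℤ)
    (hA1 : ∀ i, A i ∈ colorSet (n+1)) (hA2 : ∀ i, A i ≠ 0)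
    (hA3 : ∀ i : Fin n, A i ≠ dcol (n+1) (i:ℕ))
    (hA4 : ∀ i : Fin n, A i ≠ -(dcol (n+1) (((i:ℕ)+1) % n))) :
    IsProperSignedEdgeColoring (bookGraph m n k) (bookSigma m n k n hk' hmk') (n+1)
      (bookColoring n k (m-k) A) := by
  have hSne : dcol (n+1) n ≠ 0 := dcol_last_ne_zero hn
  have hmod : ∀ i : Fin n, ((i:ℕ)+1) % n < n := fun i => Nat.mod_lt _ (by omega)
  refine ⟨?_, ?_, ?_⟩
  -- colors in colorSet
  · rintro (a | ⟨i, p⟩) (b | ⟨i', p'⟩) hadj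
    · simp only [bookColoring]
      split_ifs
      · exact dcol_mem (by omega)
      · exact neg_mem_colorSet (dcol_mem (by omega))
    · simp only [bookColoring]
      split_ifs
      · exact dcol_mem (by omega)
      · exact neg_mem_colorSet (dcol_mem (by have := hmod i'; omega))
    · simp only [bookColoring]
      split_ifs
      · exact dcol_mem (by omega)
      · exact dcol_mem (by have := hmod i; omega)
    · simp only [bookColoring]
      split_ifs
      · exact hA1 i
      · exact neg_mem_colorSet (hA1 i)
  -- sign condition
  · rintro (a | ⟨i, p⟩) (b | ⟨i', p'⟩) hadj
    · rw [sigma_ll hk' hmk']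
      rw [adj_ll] at hadj
      simp only [bookColoring, Units.val_one]
      split_ifs <;> [skip; skip; skip; skip] <;> push_cast <;> omega
    · rw [adj_lr] at hadj
      rcases hadj with ⟨ha, hp⟩ | ⟨ha, hp⟩
      · rw [sigma_lr_near hk' hmk' ha hp]
        simp only [bookColoring, Units.val_neg, Units.val_one]
        rw [if_pos ha, if_pos ha]
        ring
      · have ha0 : (a:ℕ) ≠ 0 := by omega
        rw [sigma_lr_far hk' hmk' ha0]
        simp only [bookColoring, Units.val_one]
        rw [if_neg ha0, if_neg ha0]
        ring
    · rw [Sym2.eq_swap (a := Sum.inr (i,p))]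
      rw [adj_rl] at hadj
      rcases hadj with ⟨ha, hp⟩ | ⟨ha, hp⟩
      · rw [sigma_lr_near hk' hmk' ha hp]
        simp only [bookColoring, Units.val_neg, Units.val_one]
        rw [if_pos ha, if_pos ha]
        ring
      · have ha0 : (b:ℕ) ≠ 0 := by omega
        rw [sigma_lr_far hk' hmk' ha0]
        simp only [bookColoring, Units.val_one]
        rw [if_neg ha0, if_neg ha0]
        ring
    · rw [sigma_rr hk' hmk']
      rw [adj_rr] at hadj
      obtain ⟨hi, hp⟩ := hadj
      subst hi
      simp only [bookColoring, Units.val_one]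
      rcases hp with h | h
      · rw [if_pos h, if_neg (by omega)]
        ring
      · rw [if_neg (by omega), if_pos h]
        ring
  -- distinctness
  · have key_lr : ∀ (a b : Fin k) (i : Fin n) (p : Fin (m-k)),
        (bookGraph m n k).Adj (Sum.inl a) (Sum.inl b) →
        (bookGraph m n k).Adj (Sum.inl a) (Sum.inr (i, p)) →
        bookColoring n k (m-k) A (Sum.inl a) (Sum.inl b) ≠
          bookColoring n k (m-k) A (Sum.inl a) (Sum.inr (i, p)) := by
      intro a b i p h1 h2
      rw [adj_ll] at h1
      rw [adj_lr] at h2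
      simp only [bookColoring]
      rcases h2 with ⟨ha, -⟩ | ⟨ha, -⟩
      · rw [if_pos ha, if_pos (show (b:ℕ) = (a:ℕ)+1 by omega)]
        intro hc
        have := dcol_inj hc
        omega
      · have ha0 : (a:ℕ) ≠ 0 := by omega
        rw [if_neg ha0, if_neg (show ¬ (b:ℕ) = (a:ℕ)+1 by
          intro hb; have := b.isLt; omega)]
        intro hc
        have h5 : dcol (n+1) n = dcol (n+1) (((i:ℕ)+1) % n) := by omega
        have h6 := dcol_inj h5
        have h7 := hmod i
        omega
    have key_rr' : ∀ (i : Fin n) (p : Fin (m-k)) (a : Fin k) (i₂ : Fin n) (p₂ : Fin (m-k)),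
        (bookGraph m n k).Adj (Sum.inr (i, p)) (Sum.inl a) →
        (bookGraph m n k).Adj (Sum.inr (i, p)) (Sum.inr (i₂, p₂)) →
        bookColoring n k (m-k) A (Sum.inr (i, p)) (Sum.inl a) ≠
          bookColoring n k (m-k) A (Sum.inr (i, p)) (Sum.inr (i₂, p₂)) := by
      intro i p a i₂ p₂ h1 h2
      rw [adj_rl] at h1
      rw [adj_rr] at h2
      obtain ⟨hi2, hp2⟩ := h2
      subst hi2
      simp only [bookColoring]
      rcases h1 with ⟨ha, hp⟩ | ⟨ha, hp⟩
      · rw [if_pos ha]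
        rcases hp2 with h | h
        · rw [if_pos h]
          exact fun hc => hA3 i hc.symm
        · omega
      · have ha0 : (a:ℕ) ≠ 0 := by omega
        rw [if_neg ha0]
        rcases hp2 with h | h
        · have := p₂.isLt; omega
        · rw [if_neg (by omega)]
          intro hc
          exact hA4 i (by omega)
    rintro (a | ⟨i, p⟩) (b₁ | ⟨i₁, p₁⟩) (b₂ | ⟨i₂, p₂⟩) h1 h2 hne
    -- v = inl a, both inl
    · have hb : (b₁:ℕ) ≠ (b₂:ℕ) := by
        intro hc; exact hne (by rw [Fin.ext hc])
      rw [adj_ll] at h1 h2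
      simp only [bookColoring]
      split_ifs <;> omega
    -- v = inl, inl then inr
    · exact key_lr a b₁ i₂ p₂ h1 h2
    -- v = inl, inr then inl
    · exact (key_lr a b₂ i₁ p₁ h2 h1).symm
    -- v = inl, both inr
    · rw [adj_lr] at h1 h2
      simp only [bookColoring]
      rcases h1 with ⟨ha, hp1⟩ | ⟨ha, hp1⟩
      · have hp2 : (p₂:ℕ) = 0 := by
          rcases h2 with ⟨-, h⟩ | ⟨h, -⟩
          · exact h
          · omega
        have hii : (i₁:ℕ) ≠ (i₂:ℕ) := by
          intro hc
          refine hne ?_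
          simp only [Sum.inr.injEq, Prod.mk.injEq]
          exact ⟨Fin.ext hc, Fin.ext (hp1.trans hp2.symm)⟩
        rw [if_pos ha, if_pos ha]
        intro hc
        exact hii (dcol_inj hc)
      · have ha0 : (a:ℕ) ≠ 0 := by omega
        have hp2 : (p₂:ℕ) = m - k - 1 := by
          rcases h2 with ⟨h, -⟩ | ⟨-, h⟩
          · omega
          · exact h
        have hii : (i₁:ℕ) ≠ (i₂:ℕ) := by
          intro hc
          refine hne ?_
          simp only [Sum.inr.injEq, Prod.mk.injEq]
          exact ⟨Fin.ext hc, Fin.ext (hp1.trans hp2.symm)⟩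
        rw [if_neg ha0, if_neg ha0]
        intro hc
        have hc' : dcol (n+1) (((i₁:ℕ)+1) % n) = dcol (n+1) (((i₂:ℕ)+1) % n) := by omega
        have hmm := dcol_inj hc'
        rw [succ_mod i₁.isLt, succ_mod i₂.isLt] at hmm
        have h1 := i₁.isLt
        have h2 := i₂.isLt
        split_ifs at hmm <;> omega
    -- v = inr, both inl
    · rw [adj_rl] at h1 h2
      have hb : (b₁:ℕ) ≠ (b₂:ℕ) := by
        intro hc; exact hne (by rw [Fin.ext hc])
      simp only [bookColoring]
      have hiin : ((i:ℕ)+1) % n ≠ (i:ℕ) := by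
        rw [succ_mod i.isLt]
        have := i.isLt
        split_ifs <;> omega
      rcases h1 with ⟨ha1, -⟩ | ⟨ha1, -⟩ <;> rcases h2 with ⟨ha2, -⟩ | ⟨ha2, -⟩
      · omega
      · rw [if_pos ha1, if_neg (by omega)]
        intro hc; exact hiin (dcol_inj hc).symm
      · rw [if_neg (by omega), if_pos ha2]
        intro hc; exact hiin (dcol_inj hc)
      · omega
    -- v = inr, inl then inr
    · exact key_rr' i p b₁ i₂ p₂ h1 h2
    -- v = inr, inr then inl
    · exact (key_rr' i p b₂ i₁ p₁ h2 h1).symm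
    -- v = inr, both inr
    · rw [adj_rr] at h1 h2
      obtain ⟨hi1, hp1⟩ := h1
      obtain ⟨hi2, hp2⟩ := h2
      subst hi1
      have hpp : (p₁:ℕ) ≠ (p₂:ℕ) := by
        intro hc
        refine hne ?_
        simp only [Sum.inr.injEq, Prod.mk.injEq]
        exact ⟨hi2, Fin.ext hc⟩
      simp only [bookColoring]
      have := hA2 i
      split_ifs <;> omega

lemma lower (m n k q : ℕ) (hn : 2 ≤ n) (hk : 2 ≤ k) (hmk : 1 ≤ m - k)
    (σ : Sym2 (BookVertex m n k) → ℤˣ)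
    (γ : BookVertex m n k → BookVertex m n k → ℤ)
    (h : IsProperSignedEdgeColoring (bookGraph m n k) σ q γ) : n + 1 ≤ q := by
  obtain ⟨hmem, -, hdist⟩ := h
  set v0 : Fin k := ⟨0, by omega⟩ with hv0
  set v1 : Fin k := ⟨1, by omega⟩ with hv1
  set u0 : Fin (m-k) := ⟨0, by omega⟩ with hu0
  have hadj1 : (bookGraph m n k).Adj (Sum.inl v0) (Sum.inl v1) := adj_ll.2 (Or.inl rfl)
  have hadj2 : ∀ i : Fin n, (bookGraph m n k).Adj (Sum.inl v0) (Sum.inr (i, u0)) :=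
    fun i => adj_lr.2 (Or.inl ⟨rfl, rfl⟩)
  set f : Fin (n+1) → ℤ := fun j =>
    if h : (j:ℕ) < n then γ (Sum.inl v0) (Sum.inr (⟨j, h⟩, u0))
    else γ (Sum.inl v0) (Sum.inl v1) with hf
  have hfmem : ∀ j, f j ∈ colorSet q := by
    intro j
    simp only [hf]
    split_ifs with h
    · exact hmem (hadj2 _)
    · exact hmem hadj1
  have hfinj : Function.Injective f := by
    intro j j' hjj
    by_contra hne
    have hvne : (j:ℕ) ≠ (j':ℕ) := fun hc => hne (Fin.ext hc)
    simp only [hf] at hjj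
    split_ifs at hjj with h h'
    · refine hdist (hadj2 _) (hadj2 _) ?_ hjj
      simp only [ne_eq, Sum.inr.injEq, Prod.mk.injEq, Fin.mk.injEq]
      rintro ⟨hc, -⟩
      exact hvne hc
    · refine hdist (hadj2 _) hadj1 ?_ hjj
      simp
    · refine hdist hadj1 (hadj2 _) ?_ hjj
      simp
    · have hj := j.isLt
      have hj' := j'.isLt
      omega
  have himg : (Finset.image f Finset.univ).card = n+1 := by
    rw [Finset.card_image_of_injective _ hfinj, Finset.card_univ, Fintype.card_fin]
  set r : ℤ := ((q/2 : ℕ) : ℤ) with hr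
  set T : Finset ℤ := if q % 2 = 0 then (Finset.Icc (-r) r).erase 0 else Finset.Icc (-r) r
    with hT
  have hsub : Finset.image f Finset.univ ⊆ T := by
    intro x hx
    simp only [Finset.mem_image] at hx
    obtain ⟨j, -, rfl⟩ := hx
    have hmj := hfmem j
    simp only [colorSet, Set.mem_setOf_eq] at hmj
    simp only [hT]
    split_ifs with hq
    · rw [Finset.mem_erase, Finset.mem_Icc]
      have h0 := hmj.2 (Nat.even_iff.2 hq)
      refine ⟨h0, ?_, ?_⟩ <;> omega
    · rw [Finset.mem_Icc]
      constructor <;> omega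
  have hTcard : T.card ≤ q := by
    simp only [hT]
    split_ifs with hq
    · rw [Finset.card_erase_of_mem (by rw [Finset.mem_Icc]; constructor <;> omega),
        Int.card_Icc]
      omega
    · rw [Int.card_Icc]
      omega
  calc n + 1 = (Finset.image f Finset.univ).card := himg.symm
    _ ≤ T.card := Finset.card_le_card hsub
    _ ≤ q := hTcard

end BookAux

/-- For all odd `m ≥ 3` and all `n ≥ 2`, `k ≥ 2` with `m - k ≥ 1`, the
signed generalized book graph `(B(m,n,k), σ_n)`, whose negative edges are exactly
`v₁u₁ⁱ` for `1 ≤ i ≤ n`, has chromatic index `n + 1`. -/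


theorem book_chromatic_index_sigma_n_odd (m n k : ℕ) (hm : 3 ≤ m) (hodd : Odd m)
    (hn : 2 ≤ n) (hk : 2 ≤ k) (hmk : 1 ≤ m - k) :
    signedChromaticIndex (bookGraph m n k)
      (bookSigma m n k n (by omega) (by omega)) = n + 1 := by
  classical
  choose A hA1 hA2 hA3 hA4 using fun i : Fin n => BookAux.a_exists n hn i.1 i.2
  have hup : (n+1) ∈ {q : ℕ | ∃ γ : BookVertex m n k → BookVertex m n k → ℤ,
      IsProperSignedEdgeColoring (bookGraph m n k)
        (bookSigma m n k n (by omega) (by omega)) q γ} :=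
    ⟨BookAux.bookColoring n k (m-k) A,
      BookAux.proper m n k hm hn hk hmk (by omega) (by omega) A hA1 hA2 hA3 hA4⟩
  unfold signedChromaticIndex
  apply le_antisymm
  · exact Nat.sInf_le hup
  · refine le_csInf ⟨_, hup⟩ ?_
    rintro q ⟨γ, hγ⟩
    exact BookAux.lower m n k q hn hk hmk _ γ hγ
end

section
/- For every signature σ on the complete graph K₄, the chromatic index satisfies χ'(K₄,σ) = 3. -/
open scoped Classical

def eIdx : Fin 4 → Fin 4 → Fin 6 := fun v w =>
  match v.val, w.val with
  | 0, 1 => 0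
  | 0, 2 => 1
  | 0, 3 => 2
  | 1, 2 => 3
  | 1, 3 => 4
  | _, _ => 5

def edgeOf : Fin 6 → Sym2 (Fin 4) :=
  ![s((0:Fin 4), 1), s((0:Fin 4), 2), s((0:Fin 4), 3), s((1:Fin 4), 2), s((1:Fin 4), 3), s((2:Fin 4), 3)]

lemma edgeOf_eIdx : ∀ v w : Fin 4, v < w → edgeOf (eIdx v w) = s(v, w) := by decide

def gg (s : Fin 6 → Bool) (f : Fin 6 → Fin 3) : Fin 4 → Fin 4 → ℤ :=
  fun v w =>
    if v < w then (f (eIdx v w) : ℤ) - 1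
    else if w < v then (if s (eIdx w v) then -1 else 1) * ((f (eIdx w v) : ℤ) - 1)
    else 0

def W : Fin 64 → Fin 6 → Fin 3 :=
  ![![0, 1, 2, 2, 1, 0],
    ![1, 0, 2, 2, 0, 1],
    ![0, 1, 2, 2, 1, 0],
    ![0, 2, 1, 1, 0, 2],
    ![0, 2, 1, 1, 2, 0],
    ![0, 1, 2, 0, 1, 2],
    ![1, 0, 2, 0, 2, 1],
    ![0, 1, 2, 0, 1, 2],
    ![0, 2, 1, 1, 2, 0],
    ![0, 1, 2, 0, 1, 0],
    ![1, 0, 2, 2, 0, 1],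
    ![0, 1, 2, 0, 1, 0],
    ![0, 1, 2, 2, 1, 2],
    ![1, 0, 2, 0, 2, 1],
    ![0, 1, 2, 2, 1, 2],
    ![0, 2, 1, 1, 0, 2],
    ![0, 1, 2, 2, 1, 0],
    ![0, 2, 1, 1, 0, 0],
    ![0, 1, 2, 2, 1, 0],
    ![1, 0, 2, 0, 2, 1],
    ![1, 0, 2, 2, 0, 1],
    ![0, 1, 2, 0, 1, 2],
    ![0, 2, 1, 1, 2, 2],
    ![0, 1, 2, 0, 1, 2],
    ![1, 0, 2, 0, 2, 1],
    ![0, 1, 2, 0, 1, 0],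
    ![0, 2, 1, 1, 2, 2],
    ![0, 1, 2, 0, 1, 0],
    ![0, 1, 2, 2, 1, 2],
    ![0, 2, 1, 1, 0, 0],
    ![0, 1, 2, 2, 1, 2],
    ![1, 0, 2, 2, 0, 1],
    ![1, 0, 2, 2, 0, 1],
    ![0, 1, 2, 0, 1, 2],
    ![0, 2, 1, 1, 2, 2],
    ![0, 1, 2, 0, 1, 2],
    ![0, 1, 2, 2, 1, 0],
    ![0, 2, 1, 1, 0, 0],
    ![0, 1, 2, 2, 1, 0],
    ![1, 0, 2, 0, 2, 1],
    ![0, 1, 2, 2, 1, 2],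
    ![0, 2, 1, 1, 0, 0],
    ![0, 1, 2, 2, 1, 2],
    ![1, 0, 2, 2, 0, 1],
    ![1, 0, 2, 0, 2, 1],
    ![0, 1, 2, 0, 1, 0],
    ![0, 2, 1, 1, 2, 2],
    ![0, 1, 2, 0, 1, 0],
    ![0, 2, 1, 1, 2, 0],
    ![0, 1, 2, 0, 1, 2],
    ![1, 0, 2, 0, 2, 1],
    ![0, 1, 2, 0, 1, 2],
    ![0, 1, 2, 2, 1, 0],
    ![1, 0, 2, 2, 0, 1],
    ![0, 1, 2, 2, 1, 0],
    ![0, 2, 1, 1, 0, 2],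
    ![0, 1, 2, 2, 1, 2],
    ![1, 0, 2, 0, 2, 1],
    ![0, 1, 2, 2, 1, 2],
    ![0, 2, 1, 1, 0, 2],
    ![0, 2, 1, 1, 2, 0],
    ![0, 1, 2, 0, 1, 0],
    ![1, 0, 2, 2, 0, 1],
    ![0, 1, 2, 0, 1, 0]]


def enc (s : Fin 6 → Bool) : Fin 64 :=
  ⟨(if s 0 then 1 else 0) + 2 * (if s 1 then 1 else 0) + 4 * (if s 2 then 1 else 0)
    + 8 * (if s 3 then 1 else 0) + 16 * (if s 4 then 1 else 0) + 32 * (if s 5 then 1 else 0), by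
    split <;> split <;> split <;> split <;> split <;> split <;> norm_num⟩

set_option maxRecDepth 10000 in
lemma key : ∀ s : Fin 6 → Bool,
    ∀ v w₁ w₂ : Fin 4, v ≠ w₁ → v ≠ w₂ → w₁ ≠ w₂ →
      gg s (W (enc s)) v w₁ ≠ gg s (W (enc s)) v w₂ := by decide

lemma exists_coloring3 (σ : Sym2 (Fin 4) → ℤˣ) :
    ∃ γ : Fin 4 → Fin 4 → ℤ, IsProperSignedEdgeColoring (⊤ : SimpleGraph (Fin 4)) σ 3 γ := by
  set s : Fin 6 → Bool := fun i => decide (σ (edgeOf i) = 1) with hs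
  refine ⟨gg s (W (enc s)), ?_, ?_, ?_⟩
  · intro v w hvw
    have hne : v ≠ w := hvw.ne
    constructor
    · show (gg s (W (enc s)) v w).natAbs ≤ 3 / 2
      unfold gg
      have hb1 := (W (enc s) (eIdx v w)).isLt
      have hb2 := (W (enc s) (eIdx w v)).isLt
      split_ifs <;> omega
    · intro h; exact absurd h (by decide)
  · intro v w hvw
    have hne : v ≠ w := hvw.ne
    rcases lt_or_gt_of_ne hne with h | h
    · have he : σ s(v, w) = σ (edgeOf (eIdx v w)) := by rw [edgeOf_eIdx v w h]
      simp only [gg, if_pos h, if_neg (asymm h), if_neg (lt_irrefl w)]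
      rcases Int.units_eq_one_or (σ (edgeOf (eIdx v w))) with h1 | h1
      · have hb : s (eIdx v w) = true := by simp [hs, h1]
        rw [he, h1, hb]; simp
      · have hb : s (eIdx v w) = false := by simp [hs, h1]
        rw [he, h1, hb]; simp
    · have hsw : s(v, w) = s(w, v) := Sym2.eq_swap
      have he : σ s(v, w) = σ (edgeOf (eIdx w v)) := by rw [hsw, edgeOf_eIdx w v h]
      simp only [gg, if_pos h, if_neg (asymm h), if_neg (lt_irrefl v)]
      rcases Int.units_eq_one_or (σ (edgeOf (eIdx w v))) with h1 | h1
      · have hb : s (eIdx w v) = true := by simp [hs, h1]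
        rw [he, h1, hb]; simp
      · have hb : s (eIdx w v) = false := by simp [hs, h1]
        rw [he, h1, hb]; simp
  · intro v w₁ w₂ h1 h2 h12
    exact key s v w₁ w₂ h1.ne h2.ne h12

lemma lower_bound (σ : Sym2 (Fin 4) → ℤˣ) (q : ℕ)
    (h : ∃ γ : Fin 4 → Fin 4 → ℤ, IsProperSignedEdgeColoring (⊤ : SimpleGraph (Fin 4)) σ q γ) :
    3 ≤ q := by
  obtain ⟨γ, hmem, -, hdist⟩ := h
  by_contra hq
  push_neg at hq
  have a01 : (⊤ : SimpleGraph (Fin 4)).Adj 0 1 := by decide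
  have a02 : (⊤ : SimpleGraph (Fin 4)).Adj 0 2 := by decide
  have a03 : (⊤ : SimpleGraph (Fin 4)).Adj 0 3 := by decide
  have m1 := hmem a01
  have m2 := hmem a02
  have m3 := hmem a03
  simp only [colorSet, Set.mem_setOf_eq] at m1 m2 m3
  have d12 := hdist a01 a02 (by decide)
  have d13 := hdist a01 a03 (by decide)
  have d23 := hdist a02 a03 (by decide)
  interval_cases q
  · have := m1.2 (by decide)
    have := m1.1
    omega
  · have := m1.1
    have := m2.1
    omega
  · have e1 := m1.2 (by decide)
    have e2 := m2.2 (by decide)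
    have e3 := m3.2 (by decide)
    have := m1.1
    have := m2.1
    have := m3.1
    omega

/-- For every signature `σ` on `K₄`, `χ'(K₄, σ) = 3`. -/
theorem chromaticIndex_signed_K4 (σ : Sym2 (Fin 4) → ℤˣ) :
    signedChromaticIndex (⊤ : SimpleGraph (Fin 4)) σ = 3 := by
  have h3 : 3 ∈ {q : ℕ | ∃ γ : Fin 4 → Fin 4 → ℤ,
      IsProperSignedEdgeColoring (⊤ : SimpleGraph (Fin 4)) σ q γ} := exists_coloring3 σ
  refine le_antisymm (Nat.sInf_le h3) ?_
  exact lower_bound σ _ (Nat.sInf_mem ⟨3, h3⟩)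
end

section
/- Let σ be a signature on the complete graph K₅ with χ'(K₅,σ) = 4, and let γ be a proper 4-edge coloring of (K₅,σ) with color set {±1,±2}. Then the subgraph Σ₁ of edges colored ±1 under γ and the subgraph Σ₂ of edges colored ±2 under γ are both positive cycles of length five. -/
open scoped Classical

/-- The `c`-graph `Σ_c`: the spanning subgraph of `G` consisting of the edges whose
incidences are colored `c` or `-c` under `γ`. -/
def colorClassGraph {V : Type*} (G : SimpleGraph V) (γ : V → V → ℤ) (c : ℤ) :
    SimpleGraph V where
  Adj v w := G.Adj v w ∧ (γ v w = c ∨ γ v w = -c) ∧ (γ w v = c ∨ γ w v = -c)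
  symm := ⟨fun v w h => ⟨h.1.symm, h.2.2, h.2.1⟩⟩
  loopless := ⟨fun v h => G.loopless.1 v h.1⟩

/-! At every vertex of `K₅` the four incidences get four distinct colors from `{±1, ±2}`, so each
vertex sees both `c` and `-c`, and `Σ_c` is 2-regular. Each component of a 2-regular graph has at
least three vertices, so on five vertices `Σ_c` is a single 5-cycle. Along any cycle of `Σ_c` the
two incidences at a vertex carry `c` and `-c`, so the relation `γ(v,e) = -σ(e) γ(w,e)` carries the
color at the start of one edge to the start of the next, multiplied by the sign of the edge;
going once around the cycle forces the product of the signs to be `1`. -/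

namespace SimpleGraph

variable {V : Type*} [Fintype V] {G : SimpleGraph V}

lemma three_le_ncard_supp_of_ncard_neighborSet_eq_two (h2 : ∀ v, (G.neighborSet v).ncard = 2)
    (v : V) : 3 ≤ (G.connectedComponentMk v).supp.ncard := by
  obtain ⟨a, b, hab, hN⟩ := Set.ncard_eq_two.1 (h2 v)
  have ha : G.Adj v a := by simp [← mem_neighborSet, hN]
  have hb : G.Adj v b := by simp [← mem_neighborSet, hN]
  have hsub : {v, a, b} ⊆ (G.connectedComponentMk v).supp := by
    have hmem : ∀ x, G.Reachable x v → x ∈ (G.connectedComponentMk v).supp :=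
      fun _ hx => ConnectedComponent.eq.2 hx
    exact Set.insert_subset (hmem v (.refl v))
      (Set.pair_subset (hmem a ha.reachable.symm) (hmem b hb.reachable.symm))
  calc 3 = ({v, a, b} : Set V).ncard :=
        (Set.ncard_eq_three.2 ⟨v, a, b, ha.ne, hb.ne, hab, rfl⟩).symm
    _ ≤ _ := Set.ncard_le_ncard hsub

lemma reachable_of_ncard_neighborSet_eq_two (h2 : ∀ v, (G.neighborSet v).ncard = 2)
    (hV : Fintype.card V < 6) (v w : V) : G.Reachable v w := by
  by_contra hvw
  have hdisj : Disjoint (G.connectedComponentMk v).supp (G.connectedComponentMk w).supp := by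
    refine Set.disjoint_left.2 fun x hxv hxw => hvw (ConnectedComponent.eq.1 ?_)
    rw [ConnectedComponent.mem_supp_iff] at hxv hxw
    rw [← hxv, hxw]
  have := Set.ncard_union_eq hdisj
  have := Set.ncard_le_ncard (Set.subset_univ
    ((G.connectedComponentMk v).supp ∪ (G.connectedComponentMk w).supp))
  rw [Set.ncard_univ, Nat.card_eq_fintype_card] at this
  have := three_le_ncard_supp_of_ncard_neighborSet_eq_two h2 v
  have := three_le_ncard_supp_of_ncard_neighborSet_eq_two h2 w
  omega

lemma exists_isHamiltonianCycle_of_ncard_neighborSet_eq_two [DecidableEq V]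
    (h2 : ∀ v, (G.neighborSet v).ncard = 2) (hV : Fintype.card V < 6) (v : V) :
    ∃ p : G.Walk v v, p.IsHamiltonianCycle := by
  have hcyc : G.IsCycles := fun v _ => h2 v
  obtain ⟨p, hp, hverts⟩ := hcyc.exists_cycle_toSubgraph_verts_eq_connectedComponentSupp
    (c := G.connectedComponentMk v) rfl (Set.nonempty_of_ncard_ne_zero (by simp [h2]))
  refine ⟨p, Walk.isHamiltonianCycle_iff_isCycle_and_support_count_tail_eq_one.2
    ⟨hp, fun w => List.count_eq_one_of_mem hp.support_nodup ?_⟩⟩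
  have hw : w ∈ p.support := by
    rw [← Walk.mem_verts_toSubgraph, hverts, ConnectedComponent.mem_supp_iff,
      ConnectedComponent.eq]
    exact reachable_of_ncard_neighborSet_eq_two h2 hV w v
  rcases p.mem_support_iff.1 hw with rfl | hw
  · exact Walk.end_mem_tail_support hp.not_nil
  · exact hw

lemma Walk.IsHamiltonianCycle.mem_edges_iff_of_isCycles [DecidableEq V] {v : V} {p : G.Walk v v}
    (hp : p.IsHamiltonianCycle) (hG : G.IsCycles) (e : Sym2 V) :
    e ∈ p.edges ↔ e ∈ G.edgeSet := by
  induction e using Sym2.ind with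
  | _ a b =>
    rw [← Walk.mem_edges_toSubgraph, Subgraph.mem_edgeSet, SimpleGraph.mem_edgeSet,
      hp.isCycle.adj_toSubgraph_iff_of_isCycles hG ((p.mem_verts_toSubgraph).2 (hp.mem_support a))]

end SimpleGraph

lemma colorSet_eq_coe_filter (q : ℕ) :
    colorSet q = ↑((Finset.Icc (-(q / 2 : ℤ)) (q / 2)).filter fun c => Even q → c ≠ 0) := by
  ext c
  simp only [colorSet, Set.mem_ofPred_eq, Finset.coe_filter, Finset.mem_Icc, ← Int.ofNat_le,
    Int.natCast_natAbs, abs_le]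
  push_cast
  rfl

lemma colorSet_finite (q : ℕ) : (colorSet q).Finite := by
  rw [colorSet_eq_coe_filter]
  exact Finset.finite_toSet _

lemma ncard_colorSet (q : ℕ) : (colorSet q).ncard = q := by
  rw [colorSet_eq_coe_filter, Set.ncard_coe_finset]
  rcases Nat.even_or_odd q with hq | hq
  · have hfilter : (Finset.Icc (-(q / 2 : ℤ)) (q / 2)).filter (fun c => Even q → c ≠ 0) =
        (Finset.Icc (-(q / 2 : ℤ)) (q / 2)).erase 0 := by
      ext c; simp [hq, and_comm]
    rw [hfilter, Finset.card_erase_of_mem (by simp; omega), Int.card_Icc]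
    obtain ⟨r, rfl⟩ := hq
    omega
  · rw [Finset.filter_true_of_mem (fun c _ h => absurd h (Nat.not_even_iff_odd.2 hq)),
      Int.card_Icc]
    obtain ⟨r, rfl⟩ := hq
    omega

namespace IsProperSignedEdgeColoring

open SimpleGraph

variable {V : Type*} {G : SimpleGraph V} {σ : Sym2 V → ℤˣ} {q : ℕ} {γ : V → V → ℤ}

lemma color_symm_eq_or_eq_neg (hγ : IsProperSignedEdgeColoring G σ q γ) {v w : V}
    (h : G.Adj v w) : γ w v = γ v w ∨ γ w v = -γ v w := by
  rw [hγ.2.1 h]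
  rcases Int.units_eq_one_or (σ s(v, w)) with hs | hs <;> simp [hs]

lemma colorClassGraph_adj_iff (hγ : IsProperSignedEdgeColoring G σ q γ) {c : ℤ} {v w : V} :
    (colorClassGraph G γ c).Adj v w ↔ G.Adj v w ∧ (γ v w = c ∨ γ v w = -c) := by
  refine ⟨fun h => ⟨h.1, h.2.1⟩, fun ⟨h, hc⟩ => ⟨h, hc, ?_⟩⟩
  rcases hγ.color_symm_eq_or_eq_neg h with hs | hs <;> rw [hs] <;> omega

lemma injOn_neighborSet (hγ : IsProperSignedEdgeColoring G σ q γ) (v : V) :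
    Set.InjOn (γ v) (G.neighborSet v) :=
  fun _ h₁ _ h₂ heq => by_contra fun hne => hγ.2.2 h₁ h₂ hne heq

lemma surjOn_colorSet (hγ : IsProperSignedEdgeColoring G σ q γ) {v : V}
    (hv : (G.neighborSet v).ncard = q) : Set.SurjOn (γ v) (G.neighborSet v) (colorSet q) := by
  have hsub : γ v '' G.neighborSet v ⊆ colorSet q := Set.image_subset_iff.2 fun _ hw => hγ.1 hw
  refine (Set.eq_of_subset_of_ncard_le hsub ?_ (colorSet_finite q)).symm.subset
  rw [ncard_colorSet, (hγ.injOn_neighborSet v).ncard_image, hv]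

lemma ncard_neighborSet_colorClassGraph (hγ : IsProperSignedEdgeColoring G σ q γ) (hq : Even q)
    {v : V} (hv : (G.neighborSet v).ncard = q) {c : ℤ} (hc : c ∈ colorSet q) :
    ((colorClassGraph G γ c).neighborSet v).ncard = 2 := by
  have hnc : -c ∈ colorSet q := by simpa [colorSet] using hc
  obtain ⟨w₁, hw₁, hγ₁⟩ := hγ.surjOn_colorSet hv hc
  obtain ⟨w₂, hw₂, hγ₂⟩ := hγ.surjOn_colorSet hv hnc
  have hc0 : c ≠ 0 := hc.2 hq
  rw [Set.ncard_eq_two]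
  refine ⟨w₁, w₂, fun h => hc0 (by subst h; omega), ?_⟩
  ext w
  simp only [mem_neighborSet, hγ.colorClassGraph_adj_iff, Set.mem_insert_iff,
    Set.mem_singleton_iff]
  constructor
  · rintro ⟨hw, hwc | hwc⟩
    · exact .inl (hγ.injOn_neighborSet v hw hw₁ (hwc.trans hγ₁.symm))
    · exact .inr (hγ.injOn_neighborSet v hw hw₂ (hwc.trans hγ₂.symm))
  · rintro (rfl | rfl)
    · exact ⟨hw₁, .inl hγ₁⟩
    · exact ⟨hw₂, .inr hγ₂⟩

lemma color_eq_neg_of_adj_of_adj (hγ : IsProperSignedEdgeColoring G σ q γ) {c : ℤ} {x u y : V}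
    (hu : (colorClassGraph G γ c).Adj x u) (hy : (colorClassGraph G γ c).Adj x y) (hne : u ≠ y) :
    γ x u = -γ x y := by
  have := hγ.2.2 hu.1 hy.1 hne
  rcases hu.2.1 with h | h <;> rcases hy.2.1 with h' | h' <;> omega

lemma color_snd_eq_prod_map_edges_mul_of_isTrail (hγ : IsProperSignedEdgeColoring G σ q γ) {c : ℤ} :
    ∀ {u v : V} (p : (colorClassGraph G γ c).Walk u v), p.IsTrail → ¬p.Nil →
      γ u p.snd = ((p.edges.map σ).prod : ℤ) * -γ v p.penultimate
  | _, _, .nil, _, hnil => absurd Walk.Nil.nil hnil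
  | _, _, .cons h .nil, _, _ => by
    simp [hγ.2.1 h.1]
  | u, _, .cons h (.cons h' p), hp, _ => by
    have htrail := hp.of_cons
    have hu : u ≠ (Walk.cons h' p).snd := by
      rintro rfl
      exact ((Walk.isTrail_cons _ _).1 hp).2
        (Sym2.eq_swap ▸ Walk.mk_start_snd_mem_edges Walk.not_nil_cons)
    have ih := hγ.color_snd_eq_prod_map_edges_mul_of_isTrail _ htrail Walk.not_nil_cons
    rw [SimpleGraph.Walk.penultimate_cons_of_not_nil _ _ Walk.not_nil_cons,
      Walk.snd_cons, hγ.2.1 h.1, hγ.color_eq_neg_of_adj_of_adj h.symm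
        (Walk.adj_snd Walk.not_nil_cons) hu, ih]
    simp only [Walk.edges_cons, List.map_cons, List.prod_cons, Units.val_mul]
    ring

lemma prod_map_edges_eq_one_of_isCycle (hγ : IsProperSignedEdgeColoring G σ q γ) {c : ℤ}
    {v : V} {p : (colorClassGraph G γ c).Walk v v} (hp : p.IsCycle) :
    (p.edges.map σ).prod = 1 := by
  have hsnd := Walk.adj_snd hp.not_nil
  have hpen := (Walk.adj_penultimate hp.not_nil).symm
  have hflip := hγ.color_eq_neg_of_adj_of_adj hsnd hpen hp.snd_ne_penultimate
  have hne : γ v p.snd ≠ 0 := fun h0 =>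
    hγ.2.2 hsnd.1 hpen.1 hp.snd_ne_penultimate (by omega)
  have key := hγ.color_snd_eq_prod_map_edges_mul_of_isTrail p hp.isTrail hp.not_nil
  rw [← hflip] at key
  exact Units.ext (mul_right_cancel₀ hne (by simpa using key.symm))

end IsProperSignedEdgeColoring

theorem signed_K5_color_classes_general (σ : Sym2 (Fin 5) → ℤˣ)
    (γ : Fin 5 → Fin 5 → ℤ)
    (hγ : IsProperSignedEdgeColoring (⊤ : SimpleGraph (Fin 5)) σ 4 γ) :
    ∀ c : ℤ, c = 1 ∨ c = 2 →
      ∃ (v : Fin 5) (w : (⊤ : SimpleGraph (Fin 5)).Walk v v),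
        w.IsCycle ∧ w.length = 5 ∧
        (∀ e : Sym2 (Fin 5),
          e ∈ w.edges ↔ e ∈ (colorClassGraph (⊤ : SimpleGraph (Fin 5)) γ c).edgeSet) ∧
        (w.edges.map σ).prod = 1 := by
  intro c hc
  have hc4 : c ∈ colorSet 4 := by rcases hc with rfl | rfl <;> simp [colorSet]
  have hK5 : ∀ v, ((⊤ : SimpleGraph (Fin 5)).neighborSet v).ncard = 4 := by
    simp [Set.ncard_eq_toFinset_card', Finset.card_compl]
  have h2 := fun v => hγ.ncard_neighborSet_colorClassGraph (by decide) (hK5 v) hc4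
  obtain ⟨p, hp⟩ := SimpleGraph.exists_isHamiltonianCycle_of_ncard_neighborSet_eq_two h2 (by simp) 0
  refine ⟨0, p.mapLe le_top, hp.isCycle.mapLe _, ?_, fun e => ?_, ?_⟩
  · rw [SimpleGraph.Walk.length_mapLe, hp.length_eq, Fintype.card_fin]
  · rw [SimpleGraph.Walk.edges_mapLe_eq_edges]
    exact hp.mem_edges_iff_of_isCycles (fun v _ => h2 v) e
  · rw [SimpleGraph.Walk.edges_mapLe_eq_edges]
    exact hγ.prod_map_edges_eq_one_of_isCycle hp.isCycle

/-- If `σ` is a signature on `K₅` with `χ'(K₅, σ) = 4` and `γ` is a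
proper `4`-edge coloring of `(K₅, σ)` (with color set `{±1, ±2}`), then both `Σ₁`
(edges colored `±1`) and `Σ₂` (edges colored `±2`) are positive cycles of length 5. -/
theorem signed_K5_color_classes (σ : Sym2 (Fin 5) → ℤˣ)
    (hσ : signedChromaticIndex (⊤ : SimpleGraph (Fin 5)) σ = 4)
    (γ : Fin 5 → Fin 5 → ℤ)
    (hγ : IsProperSignedEdgeColoring (⊤ : SimpleGraph (Fin 5)) σ 4 γ) :
    ∀ c : ℤ, c = 1 ∨ c = 2 →
      ∃ (v : Fin 5) (w : (⊤ : SimpleGraph (Fin 5)).Walk v v),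
        w.IsCycle ∧ w.length = 5 ∧
        (∀ e : Sym2 (Fin 5),
          e ∈ w.edges ↔ e ∈ (colorClassGraph (⊤ : SimpleGraph (Fin 5)) γ c).edgeSet) ∧
        (w.edges.map σ).prod = 1 :=
  signed_K5_color_classes_general σ γ hγ
end

section
/- If σ is a signature on the complete graph K₅ such that (K₅,σ) is balanced (every cycle is positive), then χ'(K₅,σ) = 4. -/
open scoped Classical

/-- A signed graph is balanced if every cycle has positive sign product. -/
def IsBalanced {V : Type*} (G : SimpleGraph V) (σ : Sym2 V → ℤˣ) : Prop :=
  ∀ ⦃v : V⦄ (w : G.Walk v v), w.IsCycle → (w.edges.map σ).prod = 1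

/-- auxiliary color pattern -/
def gK5 : Fin 5 → ℤ := ![0, 1, 2, -2, -1]

lemma gK5_ne (d : Fin 5) (hd : d ≠ 0) : gK5 d ≠ 0 := by revert d; decide

lemma gK5_abs (d : Fin 5) (hd : d ≠ 0) : (gK5 d).natAbs ≤ 2 := by revert d; decide

lemma gK5_neg (d : Fin 5) : gK5 (-d) = -gK5 d := by revert d; decide

lemma gK5_inj (d e : Fin 5) (hd : d ≠ 0) (he : e ≠ 0) (h : gK5 d = gK5 e) : d = e := by
  revert d e; decide

lemma triangle_pos (σ : Sym2 (Fin 5) → ℤˣ)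
    (hbal : IsBalanced (⊤ : SimpleGraph (Fin 5)) σ)
    (a b : Fin 5) (h0a : a ≠ 0) (h0b : b ≠ 0) (hab : a ≠ b) :
    σ s(0,a) * (σ s(a,b) * σ s(b,0)) = 1 := by
  have hadj1 : (⊤ : SimpleGraph (Fin 5)).Adj 0 a := by simp [Ne.symm h0a]
  have hadj2 : (⊤ : SimpleGraph (Fin 5)).Adj a b := by simp [hab]
  have hadj3 : (⊤ : SimpleGraph (Fin 5)).Adj b 0 := by simp [h0b]
  let w : SimpleGraph.Walk ⊤ (0:Fin 5) 0 := .cons hadj1 (.cons hadj2 (.cons hadj3 .nil))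
  have hc : w.IsCycle := by
    rw [SimpleGraph.Walk.isCycle_def, SimpleGraph.Walk.isTrail_def]
    refine ⟨?_, by simp [w], ?_⟩
    · simp [w, Sym2.eq_iff]
      tauto
    · simp [w, List.Nodup]
      tauto
  have := hbal w hc
  simpa [w, mul_assoc] using this

/-- If `(K₅, σ)` is balanced, then `χ'(K₅, σ)` = 4. -/
theorem chromaticIndex_signed_K5_balanced (σ : Sym2 (Fin 5) → ℤˣ)
    (hbal : IsBalanced (⊤ : SimpleGraph (Fin 5)) σ) :
    signedChromaticIndex (⊤ : SimpleGraph (Fin 5)) σ = 4 := by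
  -- switching function
  set f : Fin 5 → ℤˣ := fun v => if v = 0 then 1 else σ s(0, v) with hf
  have hσf : ∀ v w : Fin 5, v ≠ w → σ s(v, w) = f v * f w := by
    intro v w hvw
    by_cases hv : v = 0
    · subst hv
      simp [hf, Ne.symm hvw]
    · by_cases hw : w = 0
      · subst hw
        rw [Sym2.eq_swap]
        simp [hf, hv]
      · have htri := triangle_pos σ hbal v w hv hw hvw
        have hswap : s(w, (0:Fin 5)) = s((0:Fin 5), w) := Sym2.eq_swap
        rw [hswap] at htri
        simp only [hf, if_neg hv, if_neg hw]
        rcases Int.units_eq_one_or (σ s(0, v)) with h1 | h1 <;>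
          rcases Int.units_eq_one_or (σ s(0, w)) with h2 | h2 <;>
          rw [h1, h2] at htri ⊢ <;>
          · rw [mul_comm] at htri
            simp_all [neg_eq_iff_eq_neg]
  -- the coloring
  have h4 : (4 : ℕ) ∈ {q : ℕ | ∃ γ : Fin 5 → Fin 5 → ℤ,
      IsProperSignedEdgeColoring (⊤ : SimpleGraph (Fin 5)) σ q γ} := by
    refine ⟨fun v w => (f v : ℤ) * gK5 (w - v), ?_, ?_, ?_⟩
    · intro v w hvw
      rw [SimpleGraph.top_adj] at hvw
      have hd : w - v ≠ 0 := sub_ne_zero.mpr (Ne.symm hvw)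
      constructor
      · rw [Int.natAbs_mul, Int.units_natAbs, one_mul]
        exact gK5_abs _ hd
      · intro _
        exact mul_ne_zero (Units.ne_zero _) (gK5_ne _ hd)
    · intro v w hvw
      rw [SimpleGraph.top_adj] at hvw
      rw [hσf v w hvw]
      have h1 : (f w : ℤ) * f w = 1 := by
        rw [← Units.val_mul, Int.units_mul_self, Units.val_one]
      have h2 : gK5 (w - v) = -gK5 (v - w) := by
        rw [← neg_sub v w, gK5_neg]
      show (f v : ℤ) * gK5 (w - v) = -((f v * f w : ℤˣ) : ℤ) * ((f w : ℤ) * gK5 (v - w))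
      rw [h2]
      push_cast
      ring_nf
      linear_combination ((f v : ℤ) * gK5 (v - w)) * h1
    · intro v w₁ w₂ h1 h2 hne h
      rw [SimpleGraph.top_adj] at h1 h2
      have hd1 : w₁ - v ≠ 0 := sub_ne_zero.mpr (Ne.symm h1)
      have hd2 : w₂ - v ≠ 0 := sub_ne_zero.mpr (Ne.symm h2)
      have := mul_left_cancel₀ (Units.ne_zero (f v) : (f v : ℤ) ≠ 0) h
      have := gK5_inj _ _ hd1 hd2 this
      exact hne (sub_left_inj.mp this)
  -- lower bound and conclusion
  rw [signedChromaticIndex]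
  apply le_antisymm
  · exact Nat.sInf_le h4
  · apply le_csInf ⟨4, h4⟩
    rintro q ⟨γ, hmem, hsym, hinj⟩
    by_contra hq
    push_neg at hq
    have hadj : ∀ i : Fin 5, i ≠ 0 → (⊤ : SimpleGraph (Fin 5)).Adj 0 i :=
      fun i hi => by simp [Ne.symm hi]
    have hA : ∀ i : Fin 5, i ≠ 0 → (γ 0 i).natAbs ≤ 1 := by
      intro i hi
      have := (hmem (hadj i hi)).1
      omega
    have a1 := hA 1 (by decide)
    have a2 := hA 2 (by decide)
    have a3 := hA 3 (by decide)
    have a4 := hA 4 (by decide)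
    have d12 := hinj (hadj 1 (by decide)) (hadj 2 (by decide)) (by decide)
    have d13 := hinj (hadj 1 (by decide)) (hadj 3 (by decide)) (by decide)
    have d14 := hinj (hadj 1 (by decide)) (hadj 4 (by decide)) (by decide)
    have d23 := hinj (hadj 2 (by decide)) (hadj 3 (by decide)) (by decide)
    have d24 := hinj (hadj 2 (by decide)) (hadj 4 (by decide)) (by decide)
    have d34 := hinj (hadj 3 (by decide)) (hadj 4 (by decide)) (by decide)
    omega
end

section
/- If σ is a signature on the complete graph K₅ with exactly one negative edge, then χ'(K₅,σ) = 5. -/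
open scoped Classical

/-- An explicit proper 5-edge-coloring of `K₅` whose unique negative edge is `{0,1}`. -/
def gam0 : Fin 5 → Fin 5 → ℤ :=
  ![![0, -2, -1, 0, 1], ![-2, 0, 0, -1, 2], ![1, 0, 0, -2, -1],
    ![0, 1, 2, 0, -2], ![-1, -2, 1, 2, 0]]

lemma gam0_mem : ∀ x y : Fin 5, x ≠ y → (gam0 x y).natAbs ≤ 2 := by decide

lemma gam0_sym01 : gam0 0 1 = gam0 1 0 := by decide

lemma gam0_antisym : ∀ x y : Fin 5, x ≠ y → ¬(x = 0 ∧ y = 1) → ¬(x = 1 ∧ y = 0) →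
    gam0 x y = -gam0 y x := by decide

lemma gam0_dist : ∀ x y z : Fin 5, x ≠ y → x ≠ z → y ≠ z → gam0 x y ≠ gam0 x z := by decide

lemma sum_double_ite (c : ℤ) (x y : Fin 5) :
    ∑ v : Fin 5, ∑ w : Fin 5, (if v = x ∧ w = y then c else 0) = c := by
  simp [ite_and, Finset.sum_ite_eq', Finset.sum_ite_eq]

/-- If `σ` is a signature on `K₅` with exactly one negative edge, then
`χ'(K₅, σ) = 5`. -/
theorem chromaticIndex_signed_K5_one_negative (σ : Sym2 (Fin 5) → ℤˣ)
    (hone : ∃! e : Sym2 (Fin 5),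
      e ∈ (⊤ : SimpleGraph (Fin 5)).edgeSet ∧ σ e = -1) :
    signedChromaticIndex (⊤ : SimpleGraph (Fin 5)) σ = 5 := by
  classical
  obtain ⟨e, he, huniq⟩ := hone
  induction e using Sym2.inductionOn with
  | hf a b =>
  obtain ⟨heE, hσab⟩ := he
  have hab : a ≠ b := by
    have h : (⊤ : SimpleGraph (Fin 5)).Adj a b := by simpa using heE
    exact h.ne
  have hσ : ∀ v w : Fin 5, v ≠ w → s(v, w) ≠ s(a, b) → σ s(v, w) = 1 := by
    intro v w hvw hne
    rcases Int.units_eq_one_or (σ s(v, w)) with h | h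
    · exact h
    · exact absurd (huniq s(v, w) ⟨by simpa using hvw, h⟩) hne
  set S : Set ℕ := {q : ℕ | ∃ γ : Fin 5 → Fin 5 → ℤ,
    IsProperSignedEdgeColoring (⊤ : SimpleGraph (Fin 5)) σ q γ} with hS
  -- upper bound: a proper 5-edge-coloring
  have h5 : 5 ∈ S := by
    -- permutation sending a ↦ 0, b ↦ 1
    set π : Fin 5 ≃ Fin 5 :=
      (Equiv.swap 0 a).trans (Equiv.swap 1 (Equiv.swap 0 a b)) with hπ
    have hπa : π a = 0 := by
      simp only [hπ, Equiv.trans_apply, Equiv.swap_apply_right]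
      rw [Equiv.swap_apply_of_ne_of_ne]
      · exact zero_ne_one
      · intro h
        exact hab ((Equiv.swap 0 a).injective (by rw [← h, Equiv.swap_apply_right]))
    have hπb : π b = 1 := by
      simp only [hπ, Equiv.trans_apply, Equiv.swap_apply_right]
    refine ⟨fun v w => gam0 (π v) (π w), ?_, ?_, ?_⟩
    · intro v w hadj
      refine ⟨gam0_mem _ _ (fun h => hadj.ne (π.injective h)), fun hev => absurd hev (by decide)⟩
    · intro v w hadj
      have hvw : v ≠ w := hadj.ne
      show gam0 (π v) (π w) = (-(σ s(v, w) : ℤ)) * gam0 (π w) (π v)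
      by_cases h : s(v, w) = s(a, b)
      · rw [h, hσab]
        rw [Sym2.eq_iff] at h
        rcases h with ⟨rfl, rfl⟩ | ⟨rfl, rfl⟩
        · rw [hπa, hπb]
          have := gam0_sym01
          push_cast
          linarith
        · rw [hπa, hπb]
          have := gam0_sym01
          push_cast
          linarith
      · rw [hσ v w hvw h]
        have h1 : ¬(π v = 0 ∧ π w = 1) := by
          rintro ⟨h1, h2⟩
          apply h
          rw [Sym2.eq_iff]
          exact Or.inl ⟨π.injective (by rw [h1, hπa]), π.injective (by rw [h2, hπb])⟩
        have h2 : ¬(π v = 1 ∧ π w = 0) := by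
          rintro ⟨h1, h2⟩
          apply h
          rw [Sym2.eq_iff]
          exact Or.inr ⟨π.injective (by rw [h1, hπb]), π.injective (by rw [h2, hπa])⟩
        have h3 := gam0_antisym (π v) (π w) (fun hh => hvw (π.injective hh)) h1 h2
        rw [h3]
        push_cast
        ring
    · intro v w₁ w₂ h1 h2 hne
      exact gam0_dist (π v) (π w₁) (π w₂) (fun hh => h1.ne (π.injective hh))
        (fun hh => h2.ne (π.injective hh)) (fun hh => hne (π.injective hh))
  -- lower bound: no proper q-edge-coloring for q < 5
  have hlt : ∀ q, q < 5 → q ∉ S := by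
    intro q hq hqS
    obtain ⟨γ, hmem, hsig, hdist⟩ := hqS
    have adj : ∀ v w : Fin 5, v ≠ w → (⊤ : SimpleGraph (Fin 5)).Adj v w := by
      intro v w h
      simpa using h
    rcases (by omega : q ≤ 3 ∨ q = 4) with hq3 | rfl
    · -- at most 3 colors, but vertex 0 needs 4 distinct colors
      have m : ∀ w : Fin 5, (0 : Fin 5) ≠ w → (γ 0 w).natAbs ≤ 1 := by
        intro w hw
        have hh := (hmem (adj 0 w hw)).1
        omega
      have m1 := m 1 (by decide)
      have m2 := m 2 (by decide)
      have m3 := m 3 (by decide)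
      have m4 := m 4 (by decide)
      have d12 := hdist (adj 0 1 (by decide)) (adj 0 2 (by decide)) (by decide)
      have d13 := hdist (adj 0 1 (by decide)) (adj 0 3 (by decide)) (by decide)
      have d14 := hdist (adj 0 1 (by decide)) (adj 0 4 (by decide)) (by decide)
      have d23 := hdist (adj 0 2 (by decide)) (adj 0 3 (by decide)) (by decide)
      have d24 := hdist (adj 0 2 (by decide)) (adj 0 4 (by decide)) (by decide)
      have d34 := hdist (adj 0 3 (by decide)) (adj 0 4 (by decide)) (by decide)
      omega
    · -- q = 4 : counting argument
      have hmem4 : ∀ v w : Fin 5, v ≠ w → γ v w ∈ ({-2, -1, 1, 2} : Finset ℤ) := by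
        intro v w hvw
        obtain ⟨h1, h2⟩ := hmem (adj v w hvw)
        have h3 : γ v w ≠ 0 := h2 (by decide)
        simp only [Finset.mem_insert, Finset.mem_singleton]
        omega
      -- per-vertex sum is 0
      have claimA : ∀ v : Fin 5, ∑ w ∈ Finset.univ.erase v, γ v w = 0 := by
        intro v
        have hinjOn : ∀ x ∈ Finset.univ.erase v, ∀ y ∈ Finset.univ.erase v,
            γ v x = γ v y → x = y := by
          intro x hx y hy hxy
          by_contra hne
          exact hdist (adj v x (Ne.symm (Finset.mem_erase.mp hx).1))
            (adj v y (Ne.symm (Finset.mem_erase.mp hy).1)) hne hxy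
        have himg : (Finset.univ.erase v).image (γ v) = ({-2, -1, 1, 2} : Finset ℤ) := by
          apply Finset.eq_of_subset_of_card_le
          · intro c hc
            obtain ⟨w, hw, rfl⟩ := Finset.mem_image.mp hc
            exact hmem4 v w (Ne.symm (Finset.mem_erase.mp hw).1)
          · rw [Finset.card_image_of_injOn hinjOn]
            simp [Finset.card_erase_of_mem]
        have hsum : ∑ c ∈ (Finset.univ.erase v).image (γ v), c
            = ∑ w ∈ Finset.univ.erase v, γ v w := Finset.sum_image hinjOn
        rw [← hsum, himg]
        decide
      have hγabba : γ a b = γ b a := by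
        have hh := hsig (adj a b hab)
        rw [hσab] at hh
        push_cast at hh
        linarith
      -- pairwise sums
      have hpair : ∀ v w : Fin 5, v ≠ w → γ v w + γ w v =
          (if v = a ∧ w = b then 2 * γ a b else 0) +
          (if v = b ∧ w = a then 2 * γ a b else 0) := by
        intro v w hvw
        by_cases h : s(v, w) = s(a, b)
        · rw [Sym2.eq_iff] at h
          rcases h with ⟨rfl, rfl⟩ | ⟨rfl, rfl⟩
          · rw [if_pos ⟨rfl, rfl⟩, if_neg (fun hh => hvw hh.1)]
            omega
          · rw [if_neg (fun hh => hvw hh.1), if_pos ⟨rfl, rfl⟩]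
            omega
        · have h1 : σ s(v, w) = 1 := hσ v w hvw h
          have h2 := hsig (adj v w hvw)
          rw [h1] at h2
          push_cast at h2
          rw [Sym2.eq_iff] at h
          rw [if_neg (fun hh => h (Or.inl hh)), if_neg (fun hh => h (Or.inr hh))]
          linarith
      have lhs0 : ∑ v : Fin 5, ∑ w ∈ Finset.univ.erase v, (γ v w + γ w v) = 0 := by
        have e2 : ∑ v : Fin 5, ∑ w ∈ Finset.univ.erase v, γ w v
            = ∑ w : Fin 5, ∑ v ∈ Finset.univ.erase w, γ w v := by
          apply Finset.sum_comm'
          intro x y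
          simp [Finset.mem_erase, ne_comm, eq_comm]
        simp only [Finset.sum_add_distrib]
        rw [e2]
        simp [claimA]
      have rhs : ∑ v : Fin 5, ∑ w ∈ Finset.univ.erase v, (γ v w + γ w v) = 4 * γ a b := by
        have e3 : ∀ v : Fin 5, ∑ w ∈ Finset.univ.erase v, (γ v w + γ w v)
            = ∑ w : Fin 5, ((if v = a ∧ w = b then 2 * γ a b else 0) +
                (if v = b ∧ w = a then 2 * γ a b else 0)) := by
          intro v
          rw [Finset.sum_congr rfl (fun w hw => hpair v w (Ne.symm (Finset.mem_erase.mp hw).1))]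
          apply Finset.sum_erase
          rw [if_neg (fun hh => hab (hh.1.symm.trans hh.2)),
            if_neg (fun hh => hab (hh.2.symm.trans hh.1)), add_zero]
        rw [Finset.sum_congr rfl (fun v _ => e3 v)]
        simp only [Finset.sum_add_distrib]
        rw [sum_double_ite (2 * γ a b) a b, sum_double_ite (2 * γ a b) b a]
        ring
      have hzero : γ a b = 0 := by
        rw [lhs0] at rhs
        linarith
      have hF := hmem4 a b hab
      rw [hzero] at hF
      simp at hF
  refine le_antisymm (Nat.sInf_le h5) ?_
  by_contra hcon
  push_neg at hcon
  exact hlt _ hcon (Nat.sInf_mem ⟨5, h5⟩)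
end
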